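/- For any two distributions P, Q with respective true labeling functions f_P, f_Q, and any hypothesis h ∈ H, the error of h on P is bounded by its error on Q plus half the HΔH-divergence plus the optimal combined error: ε_P(h, f_P) ≤ ε_Q(h, f_Q) + (1/2) d_{HΔH}(P, Q) + λ, where λ = inf_{h' ∈ H} (ε_P(h', f_P) + ε_Q(h', f_Q)). -/

import Mathlib

/-! Compare `h` with the jointly optimal `h*`: by the triangle inequality for the disagreement
error on `P`, then the transfer of `ε(h, h*)` from `P` to `Q` (both lie in `H`, so the
difference is at most half the divergence), then the triangle inequality on `Q`. -/

open MeasureTheory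

/-- Disagreement error of two hypotheses/labelings under a distribution D. -/
noncomputable def errD {X : Type*} [MeasurableSpace X]
    (D : Measure X) (h g : X → Bool) : ℝ :=
  (D {x | h x ≠ g x}).toReal

/-- The HΔH-divergence between probability measures P and Q over a hypothesis class H. -/
noncomputable def dHDH {X : Type*} [MeasurableSpace X]
    (H : Set (X → Bool)) (P Q : Measure X) : ℝ :=
  2 * sSup {r : ℝ | ∃ h ∈ H, ∃ h' ∈ H, r = |errD P h h' - errD Q h h'|}

section errD

variable {X : Type*} [MeasurableSpace X] (D : Measure X)

lemma errD_eq_measureReal (h g : X → Bool) : errD D h g = D.real {x | h x ≠ g x} := rfl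

lemma errD_nonneg (h g : X → Bool) : 0 ≤ errD D h g := measureReal_nonneg

lemma errD_comm (h g : X → Bool) : errD D h g = errD D g h := by
  simp only [errD, ne_comm]

variable [IsFiniteMeasure D]

lemma errD_le_measureReal_univ (h g : X → Bool) : errD D h g ≤ D.real Set.univ :=
  measureReal_mono (Set.subset_univ _)

lemma errD_le_errD_add_errD (h k g : X → Bool) :
    errD D h g ≤ errD D h k + errD D k g := by
  have hsub : {x | h x ≠ g x} ⊆ {x | h x ≠ k x} ∪ {x | k x ≠ g x} := by
    intro x hx
    by_cases hk : h x = k x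
    · exact Or.inr (show k x ≠ g x by rwa [← hk])
    · exact Or.inl hk
  simp only [errD_eq_measureReal]
  exact (measureReal_mono hsub).trans (measureReal_union_le _ _)

end errD

lemma abs_errD_sub_errD_le_half_dHDH {X : Type*} [MeasurableSpace X] {H : Set (X → Bool)}
    (P Q : Measure X) [IsFiniteMeasure P] [IsFiniteMeasure Q]
    {h h' : X → Bool} (hH : h ∈ H) (h'H : h' ∈ H) :
    |errD P h h' - errD Q h h'| ≤ (1 / 2) * dHDH H P Q := by
  have hbdd : BddAbove {r : ℝ | ∃ h ∈ H, ∃ h' ∈ H, r = |errD P h h' - errD Q h h'|} := by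
    refine ⟨P.real Set.univ + Q.real Set.univ, ?_⟩
    rintro r ⟨a, -, b, -, rfl⟩
    have hP := errD_le_measureReal_univ P a b
    have hQ := errD_le_measureReal_univ Q a b
    have := errD_nonneg P a b
    have := errD_nonneg Q a b
    rw [abs_le]
    constructor <;> linarith
  have := le_csSup hbdd ⟨h, hH, h', h'H, rfl⟩
  rw [dHDH]
  linarith

theorem domain_adaptation_bound_general {X : Type*} [MeasurableSpace X]
    (H : Set (X → Bool)) (P Q : Measure X)
    [IsProbabilityMeasure P] [IsProbabilityMeasure Q]
    (fP fQ : X → Bool)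
    (h : X → Bool) (hH : h ∈ H)
    (lam : ℝ) (hstar : X → Bool) (hstarH : hstar ∈ H)
    (hlam_eq : lam = errD P hstar fP + errD Q hstar fQ) :
    errD P h fP ≤ errD Q h fQ + (1 / 2) * dHDH H P Q + lam := by
  have hshift := (abs_le.1 (abs_errD_sub_errD_le_half_dHDH P Q hH hstarH)).2
  calc errD P h fP ≤ errD P h hstar + errD P hstar fP := errD_le_errD_add_errD P h hstar fP
    _ ≤ errD Q h hstar + (1 / 2) * dHDH H P Q + errD P hstar fP := by linarith
    _ ≤ errD Q h fQ + errD Q fQ hstar + (1 / 2) * dHDH H P Q + errD P hstar fP := by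
      linarith [errD_le_errD_add_errD Q h fQ hstar]
    _ = errD Q h fQ + (1 / 2) * dHDH H P Q + lam := by
      rw [errD_comm Q fQ hstar, hlam_eq]
      ring

/-- Domain adaptation bound: ε_P(h, f_P) ≤ ε_Q(h, f_Q) + (1/2) d_{HΔH}(P,Q) + λ,
where λ = inf_{h'∈H} (ε_P(h', f_P) + ε_Q(h', f_Q)), attained by some h* ∈ H. -/
theorem domain_adaptation_bound {X : Type*} [MeasurableSpace X]
    (H : Set (X → Bool)) (P Q : Measure X)
    [IsProbabilityMeasure P] [IsProbabilityMeasure Q]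
    (fP fQ : X → Bool) (hmP : Measurable fP) (hmQ : Measurable fQ)
    (hmeas : ∀ h ∈ H, Measurable h)
    (h : X → Bool) (hH : h ∈ H)
    (lam : ℝ) (hstar : X → Bool) (hstarH : hstar ∈ H)
    (hlam_eq : lam = errD P hstar fP + errD Q hstar fQ)
    (hlam_min : ∀ h' ∈ H, lam ≤ errD P h' fP + errD Q h' fQ) :
    errD P h fP ≤ errD Q h fQ + (1 / 2) * dHDH H P Q + lam :=
  domain_adaptation_bound_general H P Q fP fQ h hH lam hstar hstarH hlam_eq
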